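/- For the path graph P_n with attachment set At(P_n): if At(P_n) consists of a single vertex of degree 2, then fdim*(P_n) = 2; if At(P_n) contains a leaf of P_n or contains at least two vertices, then fdim*(P_n) = 0. -/

import Mathlib

/-!
In `P_n` the distance is `d(i, j) = |i - j|`, so distinct vertices `u, v` are equidistant from `x`
only when `x` is their midpoint. Hence an endpoint, or any two distinct vertices, resolve `P_n`,
and `F = ∅` is admissible. An interior vertex `a` does not resolve `P_n` on its own (`a - 1` and
`a + 1` are equidistant from it); an admissible `F` with at most one vertex would leave just `{a}`
after a fault in `F` (or with no fault at all), so `|F| ≥ 2`, and the two endpoints of the path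
form an admissible `F`.
-/

open SimpleGraph

/-- `X` is a resolving set of `G`: every pair of distinct vertices is
distinguished by the distance to some vertex of `X`. -/
def isResolving {V : Type*} (G : SimpleGraph V) (X : Set V) : Prop :=
  ∀ u v : V, u ≠ v → ∃ x ∈ X, G.dist u x ≠ G.dist v x

/-- `X` is a fault-tolerant resolving set of `G`. -/
def isFTResolving {V : Type*} (G : SimpleGraph V) (X : Set V) : Prop :=
  ∀ s ∈ X, isResolving G (X \ {s})

/-- The fault-tolerant metric dimension of `G`. -/
noncomputable def fdim {V : Type*} (G : SimpleGraph V) : ℕ :=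
  sInf {n | ∃ X : Set V, isFTResolving G X ∧ X.ncard = n}

/-- The attaching fault-tolerant metric dimension of `G` with respect to the
attachment set `At`: the least cardinality of an `F ⊆ V(G) \ At` such that
`F ∪ At` is a resolving set of `G` and `(F ∪ At) \ {x}` is a resolving set of
`G` for every `x ∈ F`. -/
noncomputable def fdimStar {V : Type*} (G : SimpleGraph V) (At : Set V) : ℕ :=
  sInf {n | ∃ F : Set V, F ⊆ Atᶜ ∧ isResolving G (F ∪ At) ∧
    (∀ x ∈ F, isResolving G ((F ∪ At) \ {x})) ∧ F.ncard = n}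

def IsAttachingFTResolving {V : Type*} (G : SimpleGraph V) (At F : Set V) : Prop :=
  F ⊆ Atᶜ ∧ isResolving G (F ∪ At) ∧ ∀ x ∈ F, isResolving G ((F ∪ At) \ {x})

section fdimStar

variable {V : Type*} {G : SimpleGraph V} {At F : Set V}

theorem fdimStar_le_ncard (hF : IsAttachingFTResolving G At F) : fdimStar G At ≤ F.ncard :=
  Nat.sInf_le ⟨F, hF.1, hF.2.1, hF.2.2, rfl⟩

theorem fdimStar_eq_zero_of_isResolving (hAt : isResolving G At) : fdimStar G At = 0 :=
  Nat.eq_zero_of_le_zero <| (fdimStar_le_ncard (F := ∅) ⟨Set.empty_subset _, by simpa using hAt,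
    fun _ hx => hx.elim⟩).trans_eq (Set.ncard_empty _)

theorem IsAttachingFTResolving.two_le_ncard (hF : IsAttachingFTResolving G At F)
    (hfin : F.Finite) (hAt : ¬ isResolving G At) : 2 ≤ F.ncard := by
  by_contra! hlt
  obtain hF0 | ⟨x, rfl⟩ := Set.ncard_le_one_iff_eq hfin |>.1 (Nat.le_of_lt_succ hlt)
  · subst hF0
    exact hAt (by simpa using hF.2.1)
  · have hxAt : x ∉ At := hF.1 rfl
    have hdiff : ({x} ∪ At) \ {x} = At := by
      rw [Set.union_sdiff_left, Set.sdiff_singleton_eq_self hxAt]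
    exact hAt (hdiff ▸ hF.2.2 x rfl)

theorem two_le_fdimStar [Finite V] (hAt : ¬ isResolving G At)
    (hF : IsAttachingFTResolving G At F) : 2 ≤ fdimStar G At :=
  le_csInf ⟨_, F, hF.1, hF.2.1, hF.2.2, rfl⟩ fun _ ⟨F', h₁, h₂, h₃, hk⟩ =>
    hk ▸ IsAttachingFTResolving.two_le_ncard ⟨h₁, h₂, h₃⟩ F'.toFinite hAt

end fdimStar

section pathGraph

variable {n : ℕ}

theorem pathGraph_natAbs_sub_le_length {i j : Fin n} (w : (pathGraph n).Walk i j) :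
    ((i : ℤ) - j).natAbs ≤ w.length := by
  induction w with
  | nil => simp
  | cons h _ ih =>
    rw [pathGraph_adj] at h
    rw [Walk.length_cons]
    omega

theorem pathGraph_dist_le (i : Fin n) :
    ∀ k (j : Fin n), (j : ℕ) = i + k → (pathGraph n).dist i j ≤ k
  | 0, j, h => by simp [Fin.ext (h.trans (Nat.add_zero _))]
  | k + 1, j, h => by
    let j' : Fin n := ⟨i + k, by omega⟩
    have hadj : (pathGraph n).Adj j' j := pathGraph_adj.2 (Or.inl (by simp [j']; omega))
    calc (pathGraph n).dist i j ≤ (pathGraph n).dist i j' + (pathGraph n).dist j' j :=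
          hadj.reachable.dist_triangle_right i
      _ ≤ k + 1 := by
          rw [dist_eq_one_iff_adj.2 hadj]
          exact Nat.add_le_add_right (pathGraph_dist_le i k j' rfl) 1

theorem pathGraph_dist (i j : Fin n) : (pathGraph n).dist i j = ((i : ℤ) - j).natAbs := by
  obtain ⟨w, hw⟩ := (pathGraph_preconnected n i j).exists_walk_length_eq_dist
  refine le_antisymm ?_ (hw ▸ pathGraph_natAbs_sub_le_length w)
  rcases le_total (i : ℕ) j with h | h
  · have := pathGraph_dist_le i (j - i) j (by omega)
    omega
  · have := pathGraph_dist_le j (i - j) i (by omega)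
    rw [dist_comm]
    omega

theorem pathGraph_add_eq_two_mul_of_dist_eq {u v x : Fin n} (huv : u ≠ v)
    (h : (pathGraph n).dist u x = (pathGraph n).dist v x) : (u : ℕ) + v = 2 * x := by
  rw [pathGraph_dist, pathGraph_dist] at h
  have := Fin.val_ne_of_ne huv
  omega

theorem isResolving_pathGraph_of_mem_of_mem {S : Set (Fin n)} {x y : Fin n} (hx : x ∈ S)
    (hy : y ∈ S) (hxy : x ≠ y) : isResolving (pathGraph n) S := by
  intro u v huv
  by_contra! h
  have hx' := pathGraph_add_eq_two_mul_of_dist_eq huv (h x hx)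
  have hy' := pathGraph_add_eq_two_mul_of_dist_eq huv (h y hy)
  exact hxy (Fin.ext (by omega))

theorem isResolving_pathGraph_of_endpoint_mem {S : Set (Fin n)} {a : Fin n} (ha : a ∈ S)
    (h : (a : ℕ) = 0 ∨ (a : ℕ) + 1 = n) : isResolving (pathGraph n) S := by
  intro u v huv
  refine ⟨a, ha, fun hd => ?_⟩
  have := pathGraph_add_eq_two_mul_of_dist_eq huv hd
  have := Fin.val_ne_of_ne huv
  omega

theorem not_isResolving_pathGraph_singleton {a : Fin n} (ha₀ : 0 < (a : ℕ))
    (ha : (a : ℕ) + 1 < n) : ¬ isResolving (pathGraph n) {a} := by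
  intro hres
  obtain ⟨x, rfl, hd⟩ := hres ⟨a - 1, by omega⟩ ⟨a + 1, ha⟩ (Fin.ne_of_val_ne (by dsimp; omega))
  simp only [pathGraph_dist] at hd
  omega

theorem pathGraph_one_lt_ncard_neighborSet_iff {a : Fin n} :
    1 < ((pathGraph n).neighborSet a).ncard ↔ 0 < (a : ℕ) ∧ (a : ℕ) + 1 < n := by
  rw [Set.one_lt_ncard (Set.toFinite _)]
  simp only [mem_neighborSet, pathGraph_adj]
  constructor
  · rintro ⟨b, hb, c, hc, hbc⟩
    have := Fin.val_ne_of_ne hbc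
    omega
  · rintro ⟨ha₀, ha⟩
    exact ⟨⟨a - 1, by omega⟩, by simp; omega, ⟨a + 1, ha⟩, by simp,
      Fin.ne_of_val_ne (by dsimp; omega)⟩

theorem isAttachingFTResolving_pathGraph_pair {At : Set (Fin n)} {x y a : Fin n} (hxy : x ≠ y)
    (hx : x ∉ At) (hy : y ∉ At) (ha : a ∈ At) :
    IsAttachingFTResolving (pathGraph n) At {x, y} := by
  refine ⟨by rintro z (rfl | rfl) <;> assumption,
    isResolving_pathGraph_of_mem_of_mem (.inl (.inl rfl)) (.inl (.inr rfl)) hxy, ?_⟩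
  have hax : a ≠ x := ne_of_mem_of_not_mem ha hx
  have hay : a ≠ y := ne_of_mem_of_not_mem ha hy
  rintro z (rfl | rfl)
  · exact isResolving_pathGraph_of_mem_of_mem ⟨.inl (.inr rfl), hxy.symm⟩ ⟨.inr ha, hax⟩ hay.symm
  · exact isResolving_pathGraph_of_mem_of_mem ⟨.inl (.inl rfl), hxy⟩ ⟨.inr ha, hay⟩ hax.symm

end pathGraph

/-- For the path `P_n`: if `At` is a single vertex of degree `2` then
`fdim*(P_n) = 2`; if `At` contains a leaf or at least two vertices then
`fdim*(P_n) = 0`. -/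
theorem fdimStar_pathGraph (n : ℕ) (At : Set (Fin n)) :
    ((∃ a, At = {a} ∧ ((SimpleGraph.pathGraph n).neighborSet a).ncard = 2) →
      fdimStar (SimpleGraph.pathGraph n) At = 2) ∧
    (((∃ a ∈ At, ((SimpleGraph.pathGraph n).neighborSet a).ncard = 1) ∨ 2 ≤ At.ncard) →
      fdimStar (SimpleGraph.pathGraph n) At = 0) := by
  refine ⟨?_, fun h => fdimStar_eq_zero_of_isResolving ?_⟩
  · rintro ⟨a, rfl, hdeg⟩
    obtain ⟨ha₀, ha⟩ := (pathGraph_one_lt_ncard_neighborSet_iff (a := a)).1 (by omega)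
    have hF : IsAttachingFTResolving (pathGraph n) {a} {⟨0, by omega⟩, ⟨n - 1, by omega⟩} :=
      isAttachingFTResolving_pathGraph_pair (a := a) (by simp [Fin.ext_iff]; omega)
        (by simp [Fin.ext_iff]; omega) (by simp [Fin.ext_iff]; omega) rfl
    exact le_antisymm ((fdimStar_le_ncard hF).trans_eq (Set.ncard_pair (by simp; omega)))
      (two_le_fdimStar (not_isResolving_pathGraph_singleton ha₀ ha) hF)
  · rcases h with ⟨a, ha, hdeg⟩ | hcard
    · have := pathGraph_one_lt_ncard_neighborSet_iff (a := a)
      exact isResolving_pathGraph_of_endpoint_mem ha (by omega)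
    · obtain ⟨x, hx, y, hy, hxy⟩ := (Set.one_lt_ncard At.toFinite).1 hcard
      exact isResolving_pathGraph_of_mem_of_mem hx hy hxy
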